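/- For every natural number n and all real numbers x, s, one has ∑_{j=0}^{n} (-s)^j · (Nat.choose (2n) j) · L (2n - 2j) x s = x^(2n) + (-s)^n · Nat.choose (2n) n. -/

import Mathlib

/-- Bivariate Lucas polynomials. -/
def L : ℕ → ℝ → ℝ → ℝ
  | 0, _, _ => 2
  | 1, x, _ => x
  | n + 2, x, s => x * L (n + 1) x s + s * L n x s

/-! If `α + β = x` and `α β = -s`, then `L m x s = α ^ m + β ^ m`. Expanding `(α + β) ^ (2n)` by the
binomial theorem and pairing the terms of index `j` and `2n - j` for `j < n` gives
`∑_{j<n} (αβ)^j C(2n,j) L(2n-2j) + (αβ)^n C(2n,n)`; the sum of the theorem also counts the middle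
term as `(αβ)^n C(2n,n) L 0`, i.e. twice. -/

theorem Finset.sum_range_succ_add_reflect {M : Type*} [AddCommMonoid M] (f : ℕ → M) (n : ℕ) :
    ∑ j ∈ range (n + 1), (f j + f (2 * n - j)) = ∑ k ∈ range (2 * n + 1), f k + f n := by
  have upper : ∑ i ∈ range n, f (n + 1 + i) = ∑ j ∈ range n, f (2 * n - j) := by
    rw [← sum_range_reflect]
    refine sum_congr rfl fun i hi => congrArg f ?_
    have := mem_range.1 hi
    omega
  rw [sum_add_distrib, show 2 * n + 1 = n + 1 + n by ring, sum_range_add f (n + 1) n, upper,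
    sum_range_succ (fun j => f (2 * n - j)), show 2 * n - n = n by omega, add_assoc]

theorem sum_pow_mul_choose_mul_pow_add_pow {R : Type*} [CommSemiring R] (α β : R) (n : ℕ) :
    ∑ j ∈ Finset.range (n + 1),
        (α * β) ^ j * ((2 * n).choose j : R) * (α ^ (2 * n - 2 * j) + β ^ (2 * n - 2 * j)) =
      (α + β) ^ (2 * n) + (α * β) ^ n * ((2 * n).choose n : R) := by
  set f : ℕ → R := fun k => α ^ k * β ^ (2 * n - k) * ((2 * n).choose k : R)
  have pair : ∀ j ∈ Finset.range (n + 1),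
      (α * β) ^ j * ((2 * n).choose j : R) * (α ^ (2 * n - 2 * j) + β ^ (2 * n - 2 * j)) =
        f j + f (2 * n - j) := by
    intro j hmem
    have hj : j ≤ n := Nat.lt_succ_iff.1 (Finset.mem_range.1 hmem)
    simp only [f]
    rw [Nat.sub_sub_self (by omega : j ≤ 2 * n), Nat.choose_symm (by omega : j ≤ 2 * n),
      show 2 * n - j = j + (2 * n - 2 * j) by omega, pow_add, pow_add, mul_pow]
    ring
  rw [Finset.sum_congr rfl pair, Finset.sum_range_succ_add_reflect, add_pow]
  simp only [f, show 2 * n - n = n by omega, mul_pow]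

theorem L_eq_pow_add_pow {x s : ℝ} {α β : ℂ} (hsum : α + β = x) (hprod : α * β = -s) (m : ℕ) :
    (L m x s : ℂ) = α ^ m + β ^ m := by
  induction m using Nat.twoStepInduction with
  | zero => norm_num [L]
  | one => simp [L, hsum]
  | more k ih₀ ih₁ =>
    have hs : (s : ℂ) = -(α * β) := by rw [hprod, neg_neg]
    simp only [L, Complex.ofReal_add, Complex.ofReal_mul, ih₀, ih₁, ← hsum, hs]
    ring

theorem exists_add_eq_and_mul_eq_neg (x s : ℝ) : ∃ α β : ℂ, α + β = x ∧ α * β = -s := by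
  obtain ⟨D, hD⟩ := IsAlgClosed.exists_eq_mul_self ((x : ℂ) ^ 2 + 4 * s)
  refine ⟨(x + D) / 2, (x - D) / 2, by ring, ?_⟩
  linear_combination hD / 4

theorem stmt_11 (n : ℕ) (x s : ℝ) :
    ∑ j ∈ Finset.range (n + 1),
        (-s) ^ j * (Nat.choose (2 * n) j : ℝ) * L (2 * n - 2 * j) x s =
      x ^ (2 * n) + (-s) ^ n * (Nat.choose (2 * n) n : ℝ) := by
  obtain ⟨α, β, hsum, hprod⟩ := exists_add_eq_and_mul_eq_neg x s
  have h := sum_pow_mul_choose_mul_pow_add_pow α β n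
  rw [hsum, hprod] at h
  apply Complex.ofReal_injective
  push_cast
  simp only [L_eq_pow_add_pow hsum hprod]
  exact h
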